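/- A word w over {a,b} is smooth if and only if its complement w̄ is smooth, and if and only if its reversal w̃ is smooth. -/

import Mathlib

/-- Run-length encoding Δ: the list of lengths of maximal runs. -/
def rle (w : List ℕ) : List ℕ := (w.splitBy (· == ·)).map List.length

/-- Trim the first entry if it is less than `b`. -/
def trimF (b : ℕ) : List ℕ → List ℕ
  | [] => []
  | x :: xs => if x < b then xs else x :: xs

/-- The derivative D: run lengths, dropping boundary runs shorter than `b`. -/
def derW (b : ℕ) (w : List ℕ) : List ℕ :=
  (trimF b ((trimF b (rle w)).reverse)).reverse

/-- `w` is a word over the alphabet `{a, b}`. -/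
def WordOver (a b : ℕ) (w : List ℕ) : Prop := ∀ c ∈ w, c = a ∨ c = b

/-- `w` is differentiable: all runs have length at most `b`, and all
interior runs have length exactly `a` or `b`. -/
def DiffW (a b : ℕ) (w : List ℕ) : Prop :=
  (∀ t ∈ rle w, t ≤ b) ∧ (∀ t ∈ ((rle w).drop 1).dropLast, t = a ∨ t = b)

/-- The closure ŵ: extend the first (resp. last) run to length `b`
if its length is strictly greater than `a`. -/
def clos (a b : ℕ) (w : List ℕ) : List ℕ :=
  (if a < (rle w).headD 0 then List.replicate (b - (rle w).headD 0) (w.headD 0) else [])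
    ++ w ++
  (if a < (rle w).getLastD 0 then List.replicate (b - (rle w).getLastD 0) (w.getLastD 0) else [])

/-- ρ(w) = D(ŵ). -/
def rhoW (a b : ℕ) (w : List ℕ) : List ℕ := derW b (clos a b w)

/-- `w` is a smooth (C^∞_{a,b}) word: it is a word over `{a,b}`, every iterated
closure is differentiable, and iterating ρ eventually yields the empty word. -/
def SmoothW (a b : ℕ) (w : List ℕ) : Prop :=
  WordOver a b w ∧ (∀ k : ℕ, DiffW a b (clos a b ((rhoW a b)^[k] w))) ∧
    ∃ k : ℕ, (rhoW a b)^[k] w = []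

/-- n-th power of a word (n-fold concatenation). -/
def lpow (u : List ℕ) (n : ℕ) : List ℕ := (List.replicate n u).flatten

/-- The pseudo-inverse Δ_α^{-1}: maps u₁u₂u₃⋯ to α^{u₁} β^{u₂} α^{u₃} ⋯ . -/
def dinv (α β : ℕ) : List ℕ → List ℕ
  | [] => []
  | t :: ts => List.replicate t α ++ dinv β α ts


/-!
Reversal reverses the run-length encoding of a word, and the complement, being injective on
`{a, b}`, leaves it unchanged. Both symmetries commute with the closure, so `ρ(w̃)` is the
reversal of `ρ(w)` while `ρ(w̄) = ρ(w)`; and differentiability only looks at run lengths, up to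
reversal. Hence every condition in the definition of smoothness is preserved along the whole
orbit `ρ^k(w)`.
-/

open List

namespace List

variable {α β : Type*}

theorem splitBy_reverse {r : α → α → Bool} (hr : ∀ x y, r x y = r y x) (l : List α) :
    l.reverse.splitBy r = ((l.splitBy r).map reverse).reverse := by
  rw [splitBy_eq_iff]
  refine ⟨by rw [← reverse_flatten, flatten_splitBy], by simp [nil_notMem_splitBy], ?_, ?_⟩
  · simp only [mem_reverse, mem_map, forall_exists_index, and_imp]
    rintro _ u hu rfl
    exact isChain_reverse.mpr ((isChain_of_mem_splitBy hu).imp fun x y h => hr x y ▸ h)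
  · rw [isChain_reverse, isChain_map]
    refine (isChain_getLast_head_splitBy r l).imp ?_
    rintro u v ⟨hu, hv, h⟩
    refine ⟨by simpa using hv, by simpa using hu, ?_⟩
    rwa [getLast_reverse, head_reverse, hr]

theorem splitBy_map {f : α → β} {r : β → β → Bool} {s : α → α → Bool} {l : List α}
    (h : ∀ x ∈ l, ∀ y ∈ l, r (f x) (f y) = s x y) :
    (l.map f).splitBy r = (l.splitBy s).map (map f) := by
  have mem : ∀ u ∈ l.splitBy s, ∀ x ∈ u, x ∈ l := fun u hu x hx => by
    simpa only [flatten_splitBy] using mem_flatten_of_mem hu hx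
  rw [splitBy_eq_iff]
  refine ⟨by rw [← map_flatten, flatten_splitBy], by simp [nil_notMem_splitBy], ?_, ?_⟩
  · simp only [mem_map, forall_exists_index, and_imp]
    rintro _ u hu rfl
    exact (isChain_map _).mpr <| (isChain_of_mem_splitBy hu).imp_of_mem_imp
      fun x y hx hy hxy => by rwa [h x (mem u hu x hx) y (mem u hu y hy)]
  · rw [isChain_map]
    refine (isChain_getLast_head_splitBy s l).imp_of_mem_imp ?_
    rintro u v hu' hv' ⟨hu, hv, e⟩
    refine ⟨by simpa using hu, by simpa using hv, ?_⟩
    rwa [getLast_map, head_map, h _ (mem u hu' _ (getLast_mem hu)) _ (mem v hv' _ (head_mem hv))]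

end List

theorem rle_reverse (w : List ℕ) : rle w.reverse = (rle w).reverse := by
  simp [rle, splitBy_reverse fun x y => Bool.beq_comm]

theorem rle_map {f : ℕ → ℕ} {w : List ℕ} (hf : Set.InjOn f {x | x ∈ w}) :
    rle (w.map f) = rle w := by
  rw [rle, splitBy_map (s := (· == ·)) fun x hx y hy => by simp [hf.eq_iff hx hy], rle]
  simp [Function.comp_def]

def trimL (b : ℕ) (l : List ℕ) : List ℕ := (trimF b l.reverse).reverse

theorem trimL_cons (b x : ℕ) {l : List ℕ} (hl : l ≠ []) :
    trimL b (x :: l) = x :: trimL b l := by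
  obtain ⟨y, t, ht⟩ := exists_cons_of_ne_nil (reverse_ne_nil_iff.mpr hl)
  rw [trimL, trimL, reverse_cons, ht, cons_append]
  simp only [trimF]
  split <;> simp

theorem trimF_trimL (b : ℕ) (l : List ℕ) : trimF b (trimL b l) = trimL b (trimF b l) := by
  rcases l with _ | ⟨x, l⟩
  · rfl
  rcases eq_or_ne l [] with rfl | hl
  · by_cases hx : x < b <;> simp [trimL, trimF, hx]
  · rw [trimL_cons b x hl]
    simp only [trimF]
    split
    · rfl
    · rw [trimL_cons b x hl]

theorem derW_eq_trimL_trimF (b : ℕ) (w : List ℕ) : derW b w = trimL b (trimF b (rle w)) := rfl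

theorem trimF_reverse (b : ℕ) (l : List ℕ) : trimF b l.reverse = (trimL b l).reverse := by
  rw [trimL, reverse_reverse]

theorem trimL_reverse (b : ℕ) (l : List ℕ) : trimL b l.reverse = (trimF b l).reverse := by
  rw [trimL, reverse_reverse]

theorem derW_reverse (b : ℕ) (w : List ℕ) : derW b w.reverse = (derW b w).reverse := by
  rw [derW_eq_trimL_trimF, derW_eq_trimL_trimF, rle_reverse, trimF_reverse, trimL_reverse,
    trimF_trimL]

theorem derW_congr_rle (b : ℕ) {v w : List ℕ} (h : rle v = rle w) : derW b v = derW b w := by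
  rw [derW, derW, h]

section Closure

variable (a b : ℕ)

theorem clos_nil : clos a b [] = [] := by
  simp [clos, show rle [] = [] from rfl]

theorem rhoW_nil : rhoW a b [] = [] := by
  rw [rhoW, clos_nil]
  rfl

theorem mem_of_mem_clos {w : List ℕ} {x : ℕ} (hx : x ∈ clos a b w) : x ∈ w := by
  rcases w with _ | ⟨y, w⟩
  · rwa [clos_nil] at hx
  simp only [clos, mem_append] at hx
  rcases hx with (hx | hx) | hx
  · split at hx
    · simp [eq_of_mem_replicate hx]
    · simp at hx
  · exact hx
  · split at hx
    · rw [eq_of_mem_replicate hx, getLastD_eq_getLast?, getLast?_eq_some_getLast (cons_ne_nil y w)]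
      exact getLast_mem _
    · simp at hx

theorem clos_reverse (w : List ℕ) : clos a b w.reverse = (clos a b w).reverse := by
  simp only [clos, rle_reverse, headD_eq_head?_getD, getLastD_eq_getLast?, head?_reverse,
    getLast?_reverse, reverse_append, apply_ite reverse, reverse_replicate, reverse_nil,
    append_assoc]

theorem clos_map {f : ℕ → ℕ} {w : List ℕ} (hf : Set.InjOn f {x | x ∈ w}) :
    clos a b (w.map f) = (clos a b w).map f := by
  rcases w with _ | ⟨x, w⟩
  · simp [clos_nil]
  have hlast : ((x :: w).map f).getLastD 0 = f ((x :: w).getLastD 0) := by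
    simp only [getLastD_eq_getLast?, getLast?_map, getLast?_eq_some_getLast (cons_ne_nil x w)]
    rfl
  rw [clos, clos, rle_map hf, hlast]
  simp only [headD_cons, map_cons, map_append, apply_ite (map f), map_replicate, map_nil]

theorem rhoW_map {f : ℕ → ℕ} {w : List ℕ} (hf : Set.InjOn f {x | x ∈ w}) :
    rhoW a b (w.map f) = rhoW a b w := by
  rw [rhoW, rhoW, clos_map a b hf]
  exact derW_congr_rle b (rle_map (hf.mono fun _ => mem_of_mem_clos a b))

theorem commute_rhoW_reverse : Function.Commute (rhoW a b) reverse := fun w => by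
  rw [rhoW, rhoW, clos_reverse, derW_reverse]

theorem diffW_reverse (w : List ℕ) : DiffW a b w.reverse ↔ DiffW a b w := by
  simp only [DiffW, rle_reverse, drop_one, tail_reverse, dropLast_reverse, tail_dropLast,
    mem_reverse]

theorem diffW_clos_map {f : ℕ → ℕ} {w : List ℕ} (hf : Set.InjOn f {x | x ∈ w}) :
    DiffW a b (clos a b (w.map f)) ↔ DiffW a b (clos a b w) := by
  rw [clos_map a b hf, DiffW, DiffW, rle_map (hf.mono fun _ => mem_of_mem_clos a b)]

end Closure

section Smooth

variable {a b : ℕ}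

theorem forall_diffW_clos_iterate_rhoW_iff (w : List ℕ) :
    (∀ k, DiffW a b (clos a b ((rhoW a b)^[k] w))) ↔
      DiffW a b (clos a b w) ∧ ∀ k, DiffW a b (clos a b ((rhoW a b)^[k] (rhoW a b w))) :=
  Nat.and_forall_add_one.symm

theorem exists_iterate_rhoW_eq_nil_iff (w : List ℕ) :
    (∃ k, (rhoW a b)^[k] w = []) ↔ ∃ k, (rhoW a b)^[k] (rhoW a b w) = [] := by
  refine ⟨fun ⟨k, hk⟩ => ⟨k, ?_⟩, fun ⟨k, hk⟩ => ⟨k + 1, hk⟩⟩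
  rw [← Function.iterate_succ_apply, Function.iterate_succ_apply', hk, rhoW_nil]

theorem smoothW_iff_of_rhoW_eq {u v : List ℕ} (hw : WordOver a b u ↔ WordOver a b v)
    (hd : DiffW a b (clos a b u) ↔ DiffW a b (clos a b v)) (hρ : rhoW a b u = rhoW a b v) :
    SmoothW a b u ↔ SmoothW a b v := by
  simp only [SmoothW, forall_diffW_clos_iterate_rhoW_iff u, forall_diffW_clos_iterate_rhoW_iff v,
    exists_iterate_rhoW_eq_nil_iff u, exists_iterate_rhoW_eq_nil_iff v, hw, hd, hρ]

theorem smoothW_reverse_iff {w : List ℕ} : SmoothW a b w.reverse ↔ SmoothW a b w := by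
  have h (k : ℕ) : (rhoW a b)^[k] w.reverse = ((rhoW a b)^[k] w).reverse :=
    (commute_rhoW_reverse a b).iterate_left k w
  simp only [SmoothW, WordOver, mem_reverse, h, clos_reverse, diffW_reverse, reverse_eq_nil_iff]

def complLetter (a b c : ℕ) : ℕ := if c = a then b else a

theorem wordOver_map_complLetter (w : List ℕ) : WordOver a b (w.map (complLetter a b)) := by
  simp only [WordOver, mem_map, complLetter]
  rintro _ ⟨c, -, rfl⟩
  split <;> simp

theorem injOn_complLetter (hab : a ≠ b) : Set.InjOn (complLetter a b) {a, b} := by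
  rintro x (rfl | rfl) y (rfl | rfl) <;> simp [complLetter, hab, hab.symm]

theorem smoothW_map_complLetter_iff (hab : a ≠ b) {w : List ℕ} (hw : WordOver a b w) :
    SmoothW a b (w.map (complLetter a b)) ↔ SmoothW a b w :=
  have hf : Set.InjOn (complLetter a b) {x | x ∈ w} := (injOn_complLetter hab).mono hw
  smoothW_iff_of_rhoW_eq (iff_of_true (wordOver_map_complLetter w) hw) (diffW_clos_map a b hf)
    (rhoW_map a b hf)

end Smooth

theorem stmt6_general (a b : ℕ) (hab : a < b) (w : List ℕ)
    (hwo : WordOver a b w) :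
    (SmoothW a b w ↔ SmoothW a b (w.map fun c => if c = a then b else a)) ∧
    (SmoothW a b w ↔ SmoothW a b w.reverse) :=
  ⟨(smoothW_map_complLetter_iff hab.ne hwo).symm, smoothW_reverse_iff.symm⟩

theorem stmt6 (a b : ℕ) (ha : 0 < a) (hab : a < b) (w : List ℕ)
    (hwo : WordOver a b w) :
    (SmoothW a b w ↔ SmoothW a b (w.map fun c => if c = a then b else a)) ∧
    (SmoothW a b w ↔ SmoothW a b w.reverse) :=
  stmt6_general a b hab w hwo
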